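/- For x = aα + bβ ∈ I^m and d = at₁ + bt₂ ∈ I^m with α, β, t₁, t₂ ∈ F_2^m, the product x·d = Σᵢ xᵢdᵢ equals b·(α·t₁), where α·t₁ is the F_2 inner product. Hence the Lee weight of the codeword c_D(x) = (x·d)_{d∈D}, for D = aD₁ + bD₂ with D₁, D₂ ⊆ F_2^m, equals 2·|{(t₁,t₂) ∈ D₁×D₂ : α·t₁ = 1}|. -/

import Mathlib

open Finset

/-- The non-unital commutative ring `I` of order 4, with elements `0, a, b, c`. -/
inductive Ri : Type
  | zero | a | b | c
deriving DecidableEq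

instance : Fintype Ri where
  elems := ⟨↑[Ri.zero, Ri.a, Ri.b, Ri.c], by decide⟩
  complete := fun x => by cases x <;> decide

namespace Ri

/-- Addition table of `I` (the Klein four-group). -/
def add' : Ri → Ri → Ri
  | .zero, x => x
  | x, .zero => x
  | .a, .a => .zero
  | .a, .b => .c
  | .a, .c => .b
  | .b, .a => .c
  | .b, .b => .zero
  | .b, .c => .a
  | .c, .a => .b
  | .c, .b => .a
  | .c, .c => .zero

/-- Multiplication table of `I`: `a·a = b`, `a·c = c·a = b`, `c·c = b`, all else `0`. -/
def mul' : Ri → Ri → Ri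
  | .a, .a => .b
  | .a, .c => .b
  | .c, .a => .b
  | .c, .c => .b
  | _, _ => .zero

instance : Zero Ri := ⟨Ri.zero⟩
instance : Add Ri := ⟨add'⟩
instance : Mul Ri := ⟨mul'⟩
instance : Neg Ri := ⟨fun x => x⟩

instance : NonUnitalCommRing Ri where
  add_assoc := by decide
  zero_add := by decide
  add_zero := by decide
  add_comm := by decide
  neg_add_cancel := by decide
  left_distrib := by decide
  right_distrib := by decide
  zero_mul := by decide
  mul_zero := by decide
  mul_assoc := by decide
  mul_comm := by decide
  nsmul := nsmulRec
  zsmul := zsmulRec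

/-- The action of `𝔽₂` on `I`: `0·x = 0` and `1·x = x`. -/
def smulF (s : ZMod 2) (x : Ri) : Ri := if s = 1 then x else 0

/-- The element `a·s + b·t` of `I`, for `s, t ∈ 𝔽₂`. -/
def ofPair (s t : ZMod 2) : Ri := smulF s Ri.a + smulF t Ri.b

/-- The Gray map `Φ(a·s + b·t) = (t, s + t)`. -/
def gray : Ri → ZMod 2 × ZMod 2
  | .zero => (0, 0)
  | .a => (0, 1)
  | .b => (1, 1)
  | .c => (1, 0)

end Ri

/-- Hamming weight of a pair of bits. -/
def wt2 (p : ZMod 2 × ZMod 2) : ℕ :=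
  (if p.1 = 1 then 1 else 0) + (if p.2 = 1 then 1 else 0)

/-- Lee weight of a vector over `I`, i.e. the Hamming weight of its Gray image. -/
def leeWt {m : ℕ} (x : Fin m → Ri) : ℕ := ∑ i, wt2 (Ri.gray (x i))

/-- The vector `aα + bβ ∈ I^m`. -/
def vecI {m : ℕ} (α β : Fin m → ZMod 2) : Fin m → Ri := fun i => Ri.ofPair (α i) (β i)

theorem dot_product_and_lee_weight (m : ℕ) :
    (∀ α β t₁ t₂ : Fin m → ZMod 2,
      (∑ i, vecI α β i * vecI t₁ t₂ i) = Ri.smulF (∑ i, α i * t₁ i) Ri.b) ∧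
    (∀ (D₁ D₂ : Finset (Fin m → ZMod 2)) (α β : Fin m → ZMod 2),
      (∑ p ∈ D₁ ×ˢ D₂, wt2 (Ri.gray (∑ i, vecI α β i * vecI p.1 p.2 i)))
        = 2 * ((D₁ ×ˢ D₂).filter (fun p => (∑ i, α i * p.1 i) = 1)).card) := by
  have hf : ∀ s t : ZMod 2, Ri.smulF s Ri.b + Ri.smulF t Ri.b = Ri.smulF (s + t) Ri.b := by
    decide
  let f : ZMod 2 →+ Ri := ⟨⟨fun s => Ri.smulF s Ri.b, rfl⟩, fun s t => (hf s t).symm⟩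
  have hmul : ∀ s t u v : ZMod 2,
      Ri.ofPair s t * Ri.ofPair u v = Ri.smulF (s * u) Ri.b := by decide
  have key : ∀ α β t₁ t₂ : Fin m → ZMod 2,
      (∑ i, vecI α β i * vecI t₁ t₂ i) = Ri.smulF (∑ i, α i * t₁ i) Ri.b := by
    intro α β t₁ t₂
    have : (∑ i, vecI α β i * vecI t₁ t₂ i) = ∑ i, f (α i * t₁ i) := by
      refine Finset.sum_congr rfl fun i _ => ?_
      simp [vecI, hmul, f]
      rfl
    rw [this, ← map_sum]
    rfl
  refine ⟨key, fun D₁ D₂ α β => ?_⟩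
  have hw : ∀ s : ZMod 2, wt2 (Ri.gray (Ri.smulF s Ri.b)) = 2 * (if s = 1 then 1 else 0) := by
    decide
  calc (∑ p ∈ D₁ ×ˢ D₂, wt2 (Ri.gray (∑ i, vecI α β i * vecI p.1 p.2 i)))
      = ∑ p ∈ D₁ ×ˢ D₂, 2 * (if (∑ i, α i * p.1 i) = 1 then 1 else 0) := by
        refine Finset.sum_congr rfl fun p _ => ?_
        rw [key α β p.1 p.2, hw]
    _ = 2 * ∑ p ∈ D₁ ×ˢ D₂, (if (∑ i, α i * p.1 i) = 1 then 1 else 0) := by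
        rw [Finset.mul_sum]
    _ = 2 * ((D₁ ×ˢ D₂).filter (fun p => (∑ i, α i * p.1 i) = 1)).card := by
        simp [Finset.sum_boole]
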